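/- arXiv:1107.2612 — 7 statements merged into one kernel-verified Lean document; each statement's English description precedes it below -/
import Mathlib

section
/- The 5×5 symmetric matrix T with zero diagonal, T_{12}=T_{13}=T_{14}=7, T_{15}=13, T_{23}=T_{24}=T_{34}=12, T_{25}=T_{35}=T_{45}=7 cannot be realized as a matrix of squared Euclidean distances: there is no map f from {1,...,5} to any Euclidean space with ‖f(i)−f(j)‖² = T_{ij} for all i,j. -/
/-!
Squared Euclidean distances form a conditionally negative semidefinite kernel: if the weights
`c i` sum to zero then `∑ i j, c i c j ‖x i - x j‖² = -2 ‖∑ i, c i • x i‖² ≤ 0`.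
The weights `(3, -2, -2, -2, 3)` make this sum equal to `72` for the given matrix.
-/

theorem sum_mul_mul_norm_sub_sq_nonpos {E ι : Type*} [NormedAddCommGroup E]
    [InnerProductSpace ℝ E] (s : Finset ι) {c : ι → ℝ} (hc : ∑ i ∈ s, c i = 0) (x : ι → E) :
    ∑ i ∈ s, ∑ j ∈ s, c i * c j * ‖x i - x j‖ ^ 2 ≤ 0 := by
  have hinner := inner_sum_smul_sum_smul_of_sum_eq_zero x hc x hc
  have hnonneg := real_inner_self_nonneg (x := ∑ i ∈ s, c i • x i)
  simp only [sq]
  linarith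

/-- The given 5×5 matrix of "squared distances" is not realizable as the
matrix of squared Euclidean distances of 5 points in any Euclidean space. -/
theorem counterexample_not_realizable :
    ¬ ∃ (d : ℕ) (f : Fin 5 → EuclideanSpace ℝ (Fin d)),
      ∀ i j, ‖f i - f j‖ ^ 2 =
        (!![0, 7, 7, 7, 13;
            7, 0, 12, 12, 7;
            7, 12, 0, 12, 7;
            7, 12, 12, 0, 7;
            13, 7, 7, 7, 0] : Matrix (Fin 5) (Fin 5) ℝ) i j := by
  rintro ⟨d, f, hf⟩
  have hnonpos := sum_mul_mul_norm_sub_sq_nonpos Finset.univ (c := ![3, -2, -2, -2, 3])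
    (by simp [Fin.sum_univ_five]; norm_num) f
  simp [hf, Fin.sum_univ_five] at hnonpos
  norm_num at hnonpos
end

section
/- If a symmetric 4×4 matrix T with zero diagonal and positive off-diagonal entries satisfies T_{ik} ≤ T_{ij} + T_{jk} for all i,j,k, then T is realizable as squared Euclidean distances of 4 points in ℝ³. -/
private noncomputable def ev3 (x y z : ℝ) : EuclideanSpace ℝ (Fin 3) :=
  (WithLp.equiv 2 _).symm ![x, y, z]

private lemma ev3_normsq (x y z : ℝ) : ‖ev3 x y z‖ ^ 2 = x ^ 2 + y ^ 2 + z ^ 2 := by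
  rw [EuclideanSpace.norm_eq, Real.sq_sqrt (by positivity)]
  simp [ev3, Fin.sum_univ_three, sq_abs]

private lemma ev3_sub (x y z x' y' z' : ℝ) :
    ev3 x y z - ev3 x' y' z' = ev3 (x - x') (y - y') (z - z') := by
  ext k; fin_cases k <;> simp [ev3]

private theorem keydet (a b c d e f : ℝ)
    (hd0 : 0 ≤ d) (hda : d ≤ a) (hdb : d ≤ b)
    (he0 : 0 ≤ e) (hea : e ≤ a) (hec : e ≤ c)
    (hf0 : 0 ≤ f) (hfb : f ≤ b) (hfc : f ≤ c)
    (h1 : d + f ≤ b + e) (h2 : e + f ≤ c + d) (h3 : d + e ≤ a + f) :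
    a*f^2 + b*e^2 + c*d^2 ≤ a*b*c + 2*d*e*f := by
  nlinarith [mul_nonneg (mul_nonneg hf0 (sub_nonneg.2 hda)) (sub_nonneg.2 h2),
    mul_nonneg (mul_nonneg he0 (sub_nonneg.2 hdb)) (sub_nonneg.2 h2),
    mul_nonneg (mul_nonneg hd0 (sub_nonneg.2 hfc)) (sub_nonneg.2 h3),
    mul_nonneg (mul_nonneg hf0 (sub_nonneg.2 hea)) (sub_nonneg.2 h1),
    mul_nonneg (mul_nonneg (sub_nonneg.2 hda) (sub_nonneg.2 hec)) (sub_nonneg.2 hfb),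
    mul_nonneg (mul_nonneg (sub_nonneg.2 hdb) (sub_nonneg.2 hea)) (sub_nonneg.2 hfc),
    mul_nonneg (mul_nonneg hd0 (sub_nonneg.2 hec)) (sub_nonneg.2 h1),
    mul_nonneg (mul_nonneg he0 (sub_nonneg.2 hfb)) (sub_nonneg.2 h3)]

/-- Abstract construction: given Gram data satisfying the constraints,
produce three points realizing the six squared distances. -/
private theorem construct (a b c dd ee ff : ℝ)
    (hapos : 0 < a) (hbpos : 0 < b)
    (h12pos : 0 < a + b - 2*dd)
    (hd0 : 0 ≤ dd) (hda : dd ≤ a) (hdb : dd ≤ b)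
    (he0 : 0 ≤ ee) (hea : ee ≤ a) (hec : ee ≤ c)
    (hf0 : 0 ≤ ff) (hfb : ff ≤ b) (hfc : ff ≤ c)
    (h1 : dd + ff ≤ b + ee) (h2 : ee + ff ≤ c + dd) (h3 : dd + ee ≤ a + ff) :
    ∃ sa p q r s t : ℝ,
      sa^2 = a ∧ p^2 + q^2 = b ∧ r^2 + s^2 + t^2 = c ∧
      sa*p = dd ∧ sa*r = ee ∧ p*r + q*s = ff := by
  have key : a*ff^2 + b*ee^2 + c*dd^2 ≤ a*b*c + 2*dd*ee*ff :=
    keydet a b c dd ee ff hd0 hda hdb he0 hea hec hf0 hfb hfc h1 h2 h3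
  have hminor : dd ^ 2 < a * b := by
    rcases eq_or_lt_of_le hd0 with h | h
    · nlinarith
    · nlinarith [mul_nonneg (sub_nonneg.2 hda) (sub_nonneg.2 hdb), mul_pos h h12pos]
  obtain ⟨sa, hsa2, hsapos⟩ : ∃ x : ℝ, x^2 = a ∧ 0 < x :=
    ⟨Real.sqrt a, Real.sq_sqrt hapos.le, Real.sqrt_pos.2 hapos⟩
  have hsane : sa ≠ 0 := hsapos.ne'
  have hp : sa * (dd / sa) = dd := by field_simp
  have hr : sa * (ee / sa) = ee := by field_simp
  have hp2 : a * (dd / sa)^2 = dd^2 := by rw [← hsa2]; field_simp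
  have hr2 : a * (ee / sa)^2 = ee^2 := by rw [← hsa2]; field_simp
  have hpr : a * ((dd / sa) * (ee / sa)) = dd * ee := by rw [← hsa2]; field_simp
  have hbp : (dd / sa)^2 < b := by nlinarith
  obtain ⟨q, hq2, hqpos⟩ : ∃ x : ℝ, x^2 = b - (dd/sa)^2 ∧ 0 < x :=
    ⟨Real.sqrt _, Real.sq_sqrt (by linarith), Real.sqrt_pos.2 (by linarith)⟩
  have hqne : q ≠ 0 := hqpos.ne'
  have hs : q * ((ff - (dd/sa) * (ee/sa)) / q) = ff - (dd/sa) * (ee/sa) := by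
    field_simp
  set p := dd / sa with hpd
  set r := ee / sa with hrd
  set s := (ff - p * r) / q with hsd
  have hq2' : a * q^2 = a * b - dd^2 := by rw [hq2]; linarith [hp2]
  have e1 : a^2*q^2*s^2 = (a*ff - dd*ee)^2 := by
    calc a^2*q^2*s^2 = (a*(q*s))^2 := by ring
    _ = (a*ff - a*(p*r))^2 := by rw [hs]; ring
    _ = (a*ff - dd*ee)^2 := by rw [hpr]
  have e2 : a^2*q^2*r^2 = (a*b - dd^2)*ee^2 := by
    calc a^2*q^2*r^2 = (a*q^2)*(a*r^2) := by ring
    _ = (a*b - dd^2)*ee^2 := by rw [hq2', hr2]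
  have e3 : a^2*q^2*c = a*c*(a*b - dd^2) := by
    calc a^2*q^2*c = (a*q^2)*(a*c) := by ring
    _ = a*c*(a*b - dd^2) := by rw [hq2']; ring
  have hnum : a^2*q^2*(c - r^2 - s^2) =
      a * (a*b*c + 2*dd*ee*ff - a*ff^2 - b*ee^2 - c*dd^2) := by
    have expand : a^2*q^2*(c - r^2 - s^2) = a^2*q^2*c - a^2*q^2*r^2 - a^2*q^2*s^2 := by
      ring
    rw [expand, e1, e2, e3]; ring
  have hcrs : 0 ≤ c - r^2 - s^2 := by
    have hK : 0 < a^2 * q^2 := by positivity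
    have hnn : 0 ≤ a^2*q^2*(c - r^2 - s^2) := by
      rw [hnum]; exact mul_nonneg hapos.le (by linarith [key])
    exact (mul_nonneg_iff_of_pos_left hK).mp hnn
  obtain ⟨t, ht2⟩ : ∃ x : ℝ, x^2 = c - r^2 - s^2 := ⟨Real.sqrt _, Real.sq_sqrt hcrs⟩
  exact ⟨sa, p, q, r, s, t, hsa2, by linarith [hq2], by linarith [ht2], hp, hr,
    by linarith [hs]⟩


/-- For four points, the triangle inequality for squared distances suffices
for realizability in ℝ³: a symmetric 4×4 matrix `T` with zero diagonal,
positive off-diagonal entries, and `T i k ≤ T i j + T j k` for all `i j k`,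
is realizable as squared Euclidean distances of 4 points in ℝ³. -/
theorem four_point_realizable (T : Matrix (Fin 4) (Fin 4) ℝ)
    (hsymm : ∀ i j, T i j = T j i)
    (hdiag : ∀ i, T i i = 0)
    (hpos : ∀ i j, i ≠ j → 0 < T i j)
    (htri : ∀ i j k, T i k ≤ T i j + T j k) :
    ∃ f : Fin 4 → EuclideanSpace ℝ (Fin 3),
      ∀ i j, ‖f i - f j‖ ^ 2 = T i j := by
  have hapos : 0 < T 0 1 := hpos 0 1 (by decide)
  have hbpos : 0 < T 0 2 := hpos 0 2 (by decide)
  have hcpos : 0 < T 0 3 := hpos 0 3 (by decide)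
  have h12pos : 0 < T 1 2 := hpos 1 2 (by decide)
  have h13pos : 0 < T 1 3 := hpos 1 3 (by decide)
  have h23pos : 0 < T 2 3 := hpos 2 3 (by decide)
  have s10 : T 1 0 = T 0 1 := hsymm 1 0
  have s20 : T 2 0 = T 0 2 := hsymm 2 0
  have s30 : T 3 0 = T 0 3 := hsymm 3 0
  have s21 : T 2 1 = T 1 2 := hsymm 2 1
  have s31 : T 3 1 = T 1 3 := hsymm 3 1
  have s32 : T 3 2 = T 2 3 := hsymm 3 2
  have t102 := htri 1 0 2
  have t012 := htri 0 1 2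
  have t021 := htri 0 2 1
  have t103 := htri 1 0 3
  have t013 := htri 0 1 3
  have t031 := htri 0 3 1
  have t203 := htri 2 0 3
  have t023 := htri 0 2 3
  have t032 := htri 0 3 2
  have t123 := htri 1 2 3
  have t132 := htri 1 3 2
  have t213 := htri 2 1 3
  rw [s10] at t102 t103
  rw [s20] at t203
  rw [s21] at t021 t213
  rw [s31] at t031
  rw [s32] at t032 t132
  obtain ⟨sa, p, q, r, s, t, E1, E2, E3, E4, E5, E6⟩ :=
    construct (T 0 1) (T 0 2) (T 0 3)
      ((T 0 1 + T 0 2 - T 1 2)/2) ((T 0 1 + T 0 3 - T 1 3)/2) ((T 0 2 + T 0 3 - T 2 3)/2)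
      hapos hbpos (by linarith) (by linarith) (by linarith) (by linarith)
      (by linarith) (by linarith) (by linarith) (by linarith) (by linarith)
      (by linarith) (by linarith) (by linarith) (by linarith)
  refine ⟨![ev3 0 0 0, ev3 sa 0 0, ev3 p q 0, ev3 r s t], ?_⟩
  intro i j
  have C0 : (![ev3 0 0 0, ev3 sa 0 0, ev3 p q 0, ev3 r s t] : Fin 4 → EuclideanSpace ℝ (Fin 3)) 0 = ev3 0 0 0 := rfl
  have C1 : (![ev3 0 0 0, ev3 sa 0 0, ev3 p q 0, ev3 r s t] : Fin 4 → EuclideanSpace ℝ (Fin 3)) 1 = ev3 sa 0 0 := rfl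
  have C2 : (![ev3 0 0 0, ev3 sa 0 0, ev3 p q 0, ev3 r s t] : Fin 4 → EuclideanSpace ℝ (Fin 3)) 2 = ev3 p q 0 := rfl
  have C3 : (![ev3 0 0 0, ev3 sa 0 0, ev3 p q 0, ev3 r s t] : Fin 4 → EuclideanSpace ℝ (Fin 3)) 3 = ev3 r s t := rfl
  fin_cases i <;> fin_cases j
  · show ‖ev3 0 0 0 - ev3 0 0 0‖^2 = T 0 0
    rw [ev3_sub, ev3_normsq, hdiag]; ring
  · show ‖ev3 0 0 0 - ev3 sa 0 0‖^2 = T 0 1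
    rw [ev3_sub, ev3_normsq]; linear_combination E1
  · show ‖ev3 0 0 0 - ev3 p q 0‖^2 = T 0 2
    rw [ev3_sub, ev3_normsq]; linear_combination E2
  · show ‖ev3 0 0 0 - ev3 r s t‖^2 = T 0 3
    rw [ev3_sub, ev3_normsq]; linear_combination E3
  · show ‖ev3 sa 0 0 - ev3 0 0 0‖^2 = T 1 0
    rw [ev3_sub, ev3_normsq, s10]; linear_combination E1
  · show ‖ev3 sa 0 0 - ev3 sa 0 0‖^2 = T 1 1
    rw [ev3_sub, ev3_normsq, hdiag]; ring
  · show ‖ev3 sa 0 0 - ev3 p q 0‖^2 = T 1 2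
    rw [ev3_sub, ev3_normsq]; linear_combination E1 + E2 - 2*E4
  · show ‖ev3 sa 0 0 - ev3 r s t‖^2 = T 1 3
    rw [ev3_sub, ev3_normsq]; linear_combination E1 + E3 - 2*E5
  · show ‖ev3 p q 0 - ev3 0 0 0‖^2 = T 2 0
    rw [ev3_sub, ev3_normsq, s20]; linear_combination E2
  · show ‖ev3 p q 0 - ev3 sa 0 0‖^2 = T 2 1
    rw [ev3_sub, ev3_normsq, s21]; linear_combination E1 + E2 - 2*E4
  · show ‖ev3 p q 0 - ev3 p q 0‖^2 = T 2 2
    rw [ev3_sub, ev3_normsq, hdiag]; ring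
  · show ‖ev3 p q 0 - ev3 r s t‖^2 = T 2 3
    rw [ev3_sub, ev3_normsq]; linear_combination E2 + E3 - 2*E6
  · show ‖ev3 r s t - ev3 0 0 0‖^2 = T 3 0
    rw [ev3_sub, ev3_normsq, s30]; linear_combination E3
  · show ‖ev3 r s t - ev3 sa 0 0‖^2 = T 3 1
    rw [ev3_sub, ev3_normsq, s31]; linear_combination E1 + E3 - 2*E5
  · show ‖ev3 r s t - ev3 p q 0‖^2 = T 3 2
    rw [ev3_sub, ev3_normsq, s32]; linear_combination E2 + E3 - 2*E6
  · show ‖ev3 r s t - ev3 r s t‖^2 = T 3 3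
    rw [ev3_sub, ev3_normsq, hdiag]; ring
end

section
/- Let P be an ergodic stochastic matrix with stationary distribution w, let P^{(∞)} be the matrix with all rows equal to w. Then I − P + P^{(∞)} is invertible. -/
open Matrix Finset

/-- For an ergodic stochastic matrix `P` with stationary distribution `w`,
the matrix `I - P + P^∞` is invertible, where `P^∞` has all rows equal to `w`. -/
theorem fundamental_matrix_invertible {n : ℕ} (P : Matrix (Fin n) (Fin n) ℝ)
    (hP0 : ∀ i j, 0 ≤ P i j) (hP1 : ∀ i, ∑ j, P i j = 1)
    (herg : ∃ k : ℕ, ∀ i j, 0 < (P ^ k) i j)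
    (w : Fin n → ℝ)
    (hw1 : ∑ i, w i = 1)
    (hwP : ∀ j, ∑ i, w i * P i j = w j)
    (Pinf : Matrix (Fin n) (Fin n) ℝ)
    (hPinf : ∀ i j, Pinf i j = w j) :
    IsUnit (1 - P + Pinf) := by
  rw [Matrix.isUnit_iff_isUnit_det, isUnit_iff_ne_zero]
  intro hdet
  obtain ⟨v, hv0, hv⟩ := Matrix.exists_mulVec_eq_zero_iff.2 hdet
  obtain ⟨k, hk⟩ := herg
  -- row sums of P^m are 1
  have hrow : ∀ m : ℕ, ∀ i, ∑ j, (P ^ m) i j = 1 := by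
    intro m
    induction m with
    | zero => intro i; simp [Matrix.one_apply]
    | succ m ih =>
      intro i
      rw [pow_succ]
      simp only [Matrix.mul_apply]
      rw [Finset.sum_comm]
      simp [← Finset.mul_sum, hP1, ih]
  set c : ℝ := ∑ j, w j * v j with hc_def
  have heq : ∀ i, v i - (∑ j, P i j * v j) + c = 0 := by
    intro i
    have h := congrFun hv i
    simp only [Matrix.mulVec, dotProduct, Matrix.add_apply, Matrix.sub_apply,
      Matrix.one_apply, hPinf, Pi.zero_apply] at h
    rw [← h, hc_def]
    rw [Finset.sum_congr rfl (fun j _ => by ring_nf :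
      ∀ j ∈ Finset.univ, ((if i = j then (1:ℝ) else 0) - P i j + w j) * v j
        = (if i = j then (1:ℝ) else 0) * v j - P i j * v j + w j * v j)]
    rw [Finset.sum_add_distrib, Finset.sum_sub_distrib]
    simp [Finset.sum_ite_eq]
  have hc0 : c = 0 := by
    have h : ∑ i, w i * (v i - (∑ j, P i j * v j) + c) = 0 := by
      simp [heq]
    have expand : ∑ i, w i * (v i - (∑ j, P i j * v j) + c)
        = c - (∑ i, w i * ∑ j, P i j * v j) + c := by
      rw [Finset.sum_congr rfl (fun i _ => by ring :
        ∀ i ∈ Finset.univ, w i * (v i - (∑ j, P i j * v j) + c)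
          = w i * v i - w i * (∑ j, P i j * v j) + w i * c)]
      rw [Finset.sum_add_distrib, Finset.sum_sub_distrib, ← Finset.sum_mul, hw1, one_mul]
    have middle : (∑ i, w i * ∑ j, P i j * v j) = c := by
      calc ∑ i, w i * ∑ j, P i j * v j
          = ∑ i, ∑ j, (w i * P i j) * v j := by
            simp [Finset.mul_sum, mul_assoc]
        _ = ∑ j, (∑ i, w i * P i j) * v j := by
            rw [Finset.sum_comm]; simp [Finset.sum_mul]
        _ = c := by simp [hwP, hc_def]
    rw [expand, middle] at h
    linarith
  have hfix : ∀ i, v i = ∑ j, P i j * v j := by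
    intro i; have := heq i; rw [hc0] at this; linarith
  have hfixk : ∀ m : ℕ, ∀ i, v i = ∑ j, (P ^ m) i j * v j := by
    intro m
    induction m with
    | zero => intro i; simp [Matrix.one_apply]
    | succ m ih =>
      intro i
      rw [pow_succ]
      simp only [Matrix.mul_apply]
      calc v i = ∑ j, (P ^ m) i j * v j := ih i
        _ = ∑ j, (P ^ m) i j * ∑ l, P j l * v l := by
            simp_rw [← hfix]
        _ = ∑ l, (∑ j, (P ^ m) i j * P j l) * v l := by
            simp_rw [Finset.mul_sum, Finset.sum_mul, ← mul_assoc]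
            exact Finset.sum_comm
  -- max principle
  have hne : Nonempty (Fin n) := by
    by_contra h
    exact hv0 (funext fun i => absurd ⟨i⟩ h)
  obtain ⟨i0, hi0⟩ := Finite.exists_max v
  have hsum0 : ∑ j, (P ^ k) i0 j * (v i0 - v j) = 0 := by
    rw [Finset.sum_congr rfl (fun j _ => by ring :
      ∀ j ∈ Finset.univ, (P ^ k) i0 j * (v i0 - v j)
        = (P ^ k) i0 j * v i0 - (P ^ k) i0 j * v j)]
    rw [Finset.sum_sub_distrib, ← Finset.sum_mul, hrow k i0, one_mul, ← hfixk k i0]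
    ring
  have hall : ∀ j, v j = v i0 := by
    intro j
    have := (Finset.sum_eq_zero_iff_of_nonneg (fun j _ =>
      mul_nonneg (le_of_lt (hk i0 j)) (sub_nonneg.2 (hi0 j)))).1 hsum0 j (Finset.mem_univ j)
    have h2 : v i0 - v j = 0 := by
      rcases mul_eq_zero.1 this with h | h
      · exact absurd h (ne_of_gt (hk i0 j))
      · exact h
    linarith
  have : c = v i0 := by
    rw [hc_def]
    rw [Finset.sum_congr rfl (fun j _ => by rw [hall j])]
    rw [← Finset.sum_mul, hw1, one_mul]
  apply hv0
  funext j
  rw [hall j]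
  simp [← this, hc0]
end

section
/- Let P be an ergodic stochastic matrix with stationary distribution w, Z = (I − P + P^{(∞)})^{-1} − P^{(∞)}, Δ = diag(w)(I − P), and Z_{ij} = Z_i^j / w^j. Then for every row vector u with ∑_i u^i = 0, we have u Z̃ Δ = u and Δ Z̃ u^T = u^T, where Z̃ is the matrix (Z_{ij}). -/
/-!
Let `L = P^{(∞)} = replicateRow _ w` be the matrix whose rows all equal `w`. Stochasticity,
stationarity and normalisation of `w` give `P L = L P = L² = L`, and these identities alone show that
`Z = A⁻¹ - L`, for `A = I - P + L`, inverts `I - P` modulo `L`: `Z (I - P) = (I - P) Z = I - L`.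
Ergodicity is what makes `A` invertible: `A x = 0` forces `w ⬝ x = 0`, hence `P x = x`, so `x` is
constant by the maximum principle for the positive stochastic matrix `P^k`, hence `x = 0`.
Finally `Z̃ = Z diag(w)⁻¹` and `Δ = diag(w) (I - P)`, so `Z̃ Δ = I - L` and `Δ Z̃ = I - Lᵀ`,
and both fix every mean-zero vector.
-/

open Matrix

section InverseModuloIdempotent

variable {R : Type*} [Ring R] {P L : R}

theorem inverse_one_sub_add_sub_mul_one_sub (hPL : P * L = L) (hLP : L * P = L)
    (hLL : L * L = L) (hA : IsUnit (1 - P + L)) :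
    (Ring.inverse (1 - P + L) - L) * (1 - P) = 1 - L ∧
      (1 - P) * (Ring.inverse (1 - P + L) - L) = 1 - L := by
  set A := 1 - P + L with hA_def
  have hAL : A * L = L := by rw [hA_def, add_mul, sub_mul, one_mul, hPL, hLL]; abel
  have hLA : L * A = L := by rw [hA_def, mul_add, mul_sub, mul_one, hLP, hLL]; abel
  have hinvL : Ring.inverse A * L = L := by
    conv_lhs => rw [← hAL, ← mul_assoc, Ring.inverse_mul_cancel A hA, one_mul]
  have hLinv : L * Ring.inverse A = L := by
    conv_lhs => rw [← hLA, mul_assoc, Ring.mul_inverse_cancel A hA, mul_one]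
  have hsub : 1 - P = A - L := by rw [hA_def]; abel
  rw [hsub]
  constructor
  · rw [sub_mul, mul_sub, mul_sub, Ring.inverse_mul_cancel A hA, hinvL, hLA, hLL]; abel
  · rw [mul_sub, sub_mul, sub_mul, Ring.mul_inverse_cancel A hA, hAL, hLinv, hLL]; abel

end InverseModuloIdempotent

namespace Matrix

variable {ι R : Type*} [Fintype ι]

theorem pow_mulVec_eq_self_of_mulVec_eq_self [DecidableEq ι] [Semiring R] {Q : Matrix ι ι R}
    {x : ι → R} (hx : Q *ᵥ x = x) (k : ℕ) : (Q ^ k) *ᵥ x = x := by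
  induction k with
  | zero => exact one_mulVec x
  | succ k ih => rw [pow_succ, ← mulVec_mulVec, hx, ih]

theorem eq_of_mulVec_eq_self_of_pos [CommRing R] [LinearOrder R] [IsStrictOrderedRing R]
    {Q : Matrix ι ι R} (hQ : ∀ i j, 0 < Q i j) (hQ1 : Q *ᵥ 1 = 1) {x : ι → R}
    (hx : Q *ᵥ x = x) (i j : ι) : x i = x j := by
  have : Nonempty ι := ⟨i⟩
  obtain ⟨m, -, hm⟩ := Finset.exists_max_image Finset.univ x Finset.univ_nonempty
  suffices h : ∀ j, x j = x m by rw [h i, h j]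
  have hgap : ∑ j, Q m j * (x m - x j) = 0 := by
    have hrow : ∑ j, Q m j = 1 := by simpa [mulVec, dotProduct] using congrFun hQ1 m
    have hmean : ∑ j, Q m j * x j = x m := congrFun hx m
    simp only [mul_sub, Finset.sum_sub_distrib, ← Finset.sum_mul, hrow, one_mul, hmean, sub_self]
  intro j
  have hterm := (Finset.sum_eq_zero_iff_of_nonneg fun j _ =>
    mul_nonneg (hQ m j).le (sub_nonneg.2 (hm j (Finset.mem_univ j)))).1 hgap j (Finset.mem_univ j)
  exact (sub_eq_zero.1 ((mul_eq_zero.1 hterm).resolve_left (hQ m j).ne')).symm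

theorem vecMul_replicateRow_eq_sum_smul [CommSemiring R] (u w : ι → R) :
    u ᵥ* replicateRow ι w = (∑ i, u i) • w := by
  funext j
  simp [vecMul, dotProduct, replicateRow_apply, Finset.sum_mul]

theorem mul_replicateRow_of_mulVec_one [Semiring R] {P : Matrix ι ι R} (hP1 : P *ᵥ 1 = 1)
    (w : ι → R) : P * replicateRow ι w = replicateRow ι w := by
  ext i j
  have hrow : ∑ k, P i k = 1 := by simpa [mulVec, dotProduct] using congrFun hP1 i
  simp [mul_apply, replicateRow_apply, ← Finset.sum_mul, hrow]

theorem isUnit_one_sub_add_replicateRow [DecidableEq ι] [Field R] [LinearOrder R]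
    [IsStrictOrderedRing R] {P : Matrix ι ι R} {w : ι → R}
    (hP1 : P *ᵥ 1 = 1) (herg : ∃ k : ℕ, ∀ i j, 0 < (P ^ k) i j) (hwP : w ᵥ* P = w)
    (hw1 : ∑ i, w i = 1) : IsUnit (1 - P + replicateRow ι w) := by
  refine (isUnit_iff_isUnit_det _).2 (isUnit_iff_ne_zero.2 fun hdet => ?_)
  obtain ⟨x, hx0, hx⟩ := exists_mulVec_eq_zero_iff.2 hdet
  refine hx0 ?_
  have hwx : w ⬝ᵥ x = 0 := by
    have hwA : w ᵥ* (1 - P + replicateRow ι w) = w := by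
      rw [vecMul_add, vecMul_sub, vecMul_one, hwP, vecMul_replicateRow_eq_sum_smul, hw1, one_smul]
      abel
    simpa [dotProduct_mulVec, hwA] using congrArg (w ⬝ᵥ ·) hx
  have hPx : P *ᵥ x = x := by
    rw [add_mulVec, sub_mulVec, one_mulVec, replicateRow_mulVec_eq_const, hwx] at hx
    exact (sub_eq_zero.1 (add_zero (x - P *ᵥ x) ▸ hx)).symm
  obtain ⟨k, hk⟩ := herg
  have hconst := eq_of_mulVec_eq_self_of_pos hk (pow_mulVec_eq_self_of_mulVec_eq_self hP1 k)
    (pow_mulVec_eq_self_of_mulVec_eq_self hPx k)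
  funext i
  calc x i = ∑ j, w j * x i := by rw [← Finset.sum_mul, hw1, one_mul]
    _ = w ⬝ᵥ x := Finset.sum_congr rfl fun j _ => by rw [hconst j i]
    _ = 0 := hwx

theorem diagonal_inv_mul_diagonal [DecidableEq ι] [DivisionRing R] {w : ι → R}
    (hw : ∀ i, w i ≠ 0) : diagonal w⁻¹ * diagonal w = 1 := by
  rw [diagonal_mul_diagonal, ← diagonal_one]
  exact congrArg diagonal (funext fun i => inv_mul_cancel₀ (hw i))

theorem diagonal_mul_one_sub_replicateRow_mul_diagonal_inv [DecidableEq ι] [Field R]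
    {w : ι → R} (hw : ∀ i, w i ≠ 0) :
    diagonal w * (1 - replicateRow ι w) * diagonal w⁻¹ = (1 - replicateRow ι w)ᵀ := by
  ext i j
  rcases eq_or_ne i j with rfl | hij
  · simp only [mul_diagonal, diagonal_mul, transpose_apply, sub_apply, one_apply_eq,
      replicateRow_apply, Pi.inv_apply]
    field_simp [hw i]
  · simp [mul_diagonal, diagonal_mul, replicateRow_apply, hij, hij.symm, hw j]

end Matrix

theorem fundamental_matrix_generalized_inverse_general {n : ℕ}
    (P : Matrix (Fin n) (Fin n) ℝ)
    (hP1 : ∀ i, ∑ j, P i j = 1)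
    (herg : ∃ k : ℕ, ∀ i j, 0 < (P ^ k) i j)
    (w : Fin n → ℝ)
    (hw1 : ∑ i, w i = 1) (hwpos : ∀ i, 0 < w i)
    (hwP : ∀ j, ∑ i, w i * P i j = w j)
    (Pinf : Matrix (Fin n) (Fin n) ℝ) (hPinf : ∀ i j, Pinf i j = w j)
    (Z : Matrix (Fin n) (Fin n) ℝ) (hZ : Z = (1 - P + Pinf)⁻¹ - Pinf)
    (Ztil : Matrix (Fin n) (Fin n) ℝ) (hZtil : ∀ i j, Ztil i j = Z i j / w j)
    (Δ : Matrix (Fin n) (Fin n) ℝ)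
    (hΔ : ∀ i j, Δ i j = w i * ((if i = j then (1 : ℝ) else 0) - P i j)) :
    ∀ u : Fin n → ℝ, (∑ i, u i = 0) →
      Matrix.vecMul u (Ztil * Δ) = u ∧ Matrix.mulVec (Δ * Ztil) u = u := by
  have hP1' : P *ᵥ 1 = 1 := funext fun i => by simpa [mulVec, dotProduct] using hP1 i
  have hwP' : w ᵥ* P = w := funext fun j => by simpa [vecMul, dotProduct] using hwP j
  have hw0 : ∀ i, w i ≠ 0 := fun i => (hwpos i).ne'
  obtain rfl : Pinf = replicateRow _ w := ext hPinf
  obtain rfl : Ztil = Z * diagonal w⁻¹ := ext fun i j => by simp [hZtil, div_eq_mul_inv]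
  obtain rfl : Δ = diagonal w * (1 - P) := ext fun i j => by simp [hΔ, one_apply]
  obtain ⟨hZP, hPZ⟩ := inverse_one_sub_add_sub_mul_one_sub (mul_replicateRow_of_mulVec_one hP1' w)
    (by rw [← replicateRow_vecMul, hwP'])
    (by rw [← replicateRow_vecMul, vecMul_replicateRow_eq_sum_smul, hw1, one_smul])
    (isUnit_one_sub_add_replicateRow hP1' herg hwP' hw1)
  rw [← nonsing_inv_eq_ringInverse, ← hZ] at hZP hPZ
  have hZtilΔ : Z * diagonal w⁻¹ * (diagonal w * (1 - P)) = 1 - replicateRow _ w := by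
    rw [mul_assoc, ← mul_assoc (diagonal _), diagonal_inv_mul_diagonal hw0, one_mul, hZP]
  have hΔZtil : diagonal w * (1 - P) * (Z * diagonal w⁻¹) = (1 - replicateRow _ w)ᵀ := by
    rw [mul_assoc, ← mul_assoc (1 - P), hPZ, ← mul_assoc,
      diagonal_mul_one_sub_replicateRow_mul_diagonal_inv hw0]
  intro u hu
  have hfix : u ᵥ* (1 - replicateRow _ w) = u := by
    rw [vecMul_sub, vecMul_one, vecMul_replicateRow_eq_sum_smul, hu, zero_smul, sub_zero]
  exact ⟨by rw [hZtilΔ, hfix], by rw [hΔZtil, mulVec_transpose, hfix]⟩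

/-- The lowered fundamental matrix `Z̃` is a generalized inverse of the
Laplacian `Δ` on mean-zero vectors: `u Z̃ Δ = u` and `Δ Z̃ uᵀ = uᵀ`. -/
theorem fundamental_matrix_generalized_inverse {n : ℕ}
    (P : Matrix (Fin n) (Fin n) ℝ)
    (hP0 : ∀ i j, 0 ≤ P i j) (hP1 : ∀ i, ∑ j, P i j = 1)
    (herg : ∃ k : ℕ, ∀ i j, 0 < (P ^ k) i j)
    (w : Fin n → ℝ)
    (hw1 : ∑ i, w i = 1) (hwpos : ∀ i, 0 < w i)
    (hwP : ∀ j, ∑ i, w i * P i j = w j)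
    (Pinf : Matrix (Fin n) (Fin n) ℝ) (hPinf : ∀ i j, Pinf i j = w j)
    (Z : Matrix (Fin n) (Fin n) ℝ) (hZ : Z = (1 - P + Pinf)⁻¹ - Pinf)
    (Ztil : Matrix (Fin n) (Fin n) ℝ) (hZtil : ∀ i j, Ztil i j = Z i j / w j)
    (Δ : Matrix (Fin n) (Fin n) ℝ)
    (hΔ : ∀ i j, Δ i j = w i * ((if i = j then (1 : ℝ) else 0) - P i j)) :
    ∀ u : Fin n → ℝ, (∑ i, u i = 0) →
      Matrix.vecMul u (Ztil * Δ) = u ∧ Matrix.mulVec (Δ * Ztil) u = u :=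
  fundamental_matrix_generalized_inverse_general P hP1 herg w hw1 hwpos hwP Pinf hPinf Z hZ Ztil
    hZtil Δ hΔ
end

section
/- For an ergodic finite Markov chain on n states, there exists a map f from the state space into ℝ^n equipped with the positive semidefinite quadratic form ‖x‖² = ∑_{ij} x_i Δ^{ij} x_j such that ‖f(a) − f(b)‖² = T_{ab} for all states a, b. Concretely, f(a) = (Z̃_{a1}, ..., Z̃_{an}) works. -/
/-!
With `P^∞ = replicateRow w`, the form `xᵀ Δ x`, `Δ = diag(w) (1 - P)`, is the Dirichlet energy
`½ ∑ᵢⱼ wᵢ Pᵢⱼ (xᵢ - xⱼ)²`, hence nonnegative. A kernel vector of `1 - P + P^∞` is killed by `P^∞`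
(as `P^∞ (1 - P + P^∞) = P^∞`), so it is `P`-harmonic, hence constant by the maximum principle for
irreducible chains, hence zero. As `P^∞` is an idempotent annihilated by `1 - P` on both sides, the
fundamental matrix then satisfies `(1 - P) Z = Z (1 - P) = 1 - P^∞`. The first identity shows that
`(Z_bb - Z_ab) / w_b` solves the hitting equations of the mean first passage time to `b`, whose
solution is unique by the maximum principle again. The second sends the covector
`(xᵢ wᵢ)ᵢ = Z_a - Z_b` of `x = Z̃_a - Z̃_b` to `e_a - e_b`, so `xᵀ Δ x = x_a - x_b = M_ab + M_ba`.
-/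

open Matrix Finset

variable {ι : Type*} [Fintype ι] {P : Matrix ι ι ℝ} {w : ι → ℝ}

def IsHarmonicOff (P : Matrix ι ι ℝ) (b : ι) (f : ι → ℝ) : Prop :=
  ∀ i ≠ b, (P *ᵥ f) i = f i

theorem IsHarmonicOff.neg {b : ι} {f : ι → ℝ} (hf : IsHarmonicOff P b f) :
    IsHarmonicOff P b (-f) := fun i hi => by
  rw [mulVec_neg, Pi.neg_apply, Pi.neg_apply, hf i hi]

lemma replicateRow_mul_of_vecMul_eq (hw : w ᵥ* P = w) :
    replicateRow ι w * P = replicateRow ι w := by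
  ext i j
  simp only [mul_apply, replicateRow_apply]
  exact congrFun hw j

lemma replicateRow_mul_self (hw1 : ∑ i, w i = 1) :
    replicateRow ι w * replicateRow ι w = replicateRow ι w := by
  ext i j
  simp only [mul_apply, replicateRow_apply, ← sum_mul, hw1, one_mul]

variable [DecidableEq ι]

lemma mem_of_pow_apply_pos (hP0 : ∀ i j, 0 ≤ P i j) {S : Set ι}
    (hS : ∀ i ∈ S, ∀ j, 0 < P i j → j ∈ S) {k : ℕ} {i j : ι} (hi : i ∈ S)
    (hk : 0 < (P ^ k) i j) : j ∈ S := by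
  induction k generalizing i with
  | zero =>
    obtain rfl : i = j := by
      by_contra hij
      simp [one_apply_ne hij] at hk
    exact hi
  | succ k ih =>
    rw [pow_succ', mul_apply] at hk
    obtain ⟨l, -, hl⟩ := exists_lt_of_sum_lt (f := fun _ => (0 : ℝ)) (by simpa using hk)
    obtain ⟨hPil, hPkl⟩ := (pos_and_pos_or_neg_and_neg_of_mul_pos hl).resolve_right
      fun h => (hP0 i l).not_gt h.1
    exact ih (hS i hi l hPil) hPkl

namespace IsHarmonicOff

variable {b : ι} {f : ι → ℝ}

theorem apply_le (hP : P ∈ rowStochastic ℝ ι) (hirr : ∀ i j, ∃ k, 0 < (P ^ k) i j)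
    (hf : IsHarmonicOff P b f) (i : ι) : f i ≤ f b := by
  obtain ⟨a, -, ha⟩ := exists_max_image univ f ⟨i, mem_univ i⟩
  by_contra hlt
  have hba : f b < f a := (not_le.1 hlt).trans_le (ha i (mem_univ i))
  have hclosed : ∀ m ∈ {m | f m = f a}, ∀ j, 0 < P m j → j ∈ {m | f m = f a} := by
    intro m (hm : f m = f a) j hj
    by_contra hne
    have hmb : m ≠ b := by rintro rfl; linarith
    have : (P *ᵥ f) m < f a := calc
      (P *ᵥ f) m = ∑ l, P m l * f l := rfl
      _ < ∑ l, P m l * f a :=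
        sum_lt_sum (fun l _ => mul_le_mul_of_nonneg_left (ha l (mem_univ l))
          (nonneg_of_mem_rowStochastic hP))
          ⟨j, mem_univ j, mul_lt_mul_of_pos_left ((ha j (mem_univ j)).lt_of_ne hne) hj⟩
      _ = f a := by rw [← sum_mul, sum_row_of_mem_rowStochastic hP, one_mul]
    rw [hf m hmb] at this
    linarith
  obtain ⟨k, hk⟩ := hirr a b
  have hb : f b = f a :=
    mem_of_pow_apply_pos (fun _ _ => nonneg_of_mem_rowStochastic hP) hclosed rfl hk
  linarith

theorem apply_eq (hP : P ∈ rowStochastic ℝ ι) (hirr : ∀ i j, ∃ k, 0 < (P ^ k) i j)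
    (hf : IsHarmonicOff P b f) (i : ι) : f i = f b :=
  le_antisymm (hf.apply_le hP hirr i) (neg_le_neg_iff.1 (hf.neg.apply_le hP hirr i))

end IsHarmonicOff

lemma eq_of_hitting_equations (hP : P ∈ rowStochastic ℝ ι) (hirr : ∀ i j, ∃ k, 0 < (P ^ k) i j)
    {b : ι} {u v : ι → ℝ} (hu : ∀ i ≠ b, u i = 1 + (P *ᵥ u) i)
    (hv : ∀ i ≠ b, v i = 1 + (P *ᵥ v) i) (hb : u b = v b) : u = v := by
  have huv : IsHarmonicOff P b (u - v) := fun i hi => by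
    rw [mulVec_sub, Pi.sub_apply, Pi.sub_apply, hu i hi, hv i hi]
    ring
  funext i
  have := huv.apply_eq hP hirr i
  rw [Pi.sub_apply, Pi.sub_apply, hb, sub_self] at this
  linarith

lemma mul_replicateRow_of_mem_rowStochastic (hP : P ∈ rowStochastic ℝ ι) :
    P * replicateRow ι w = replicateRow ι w := by
  ext i j
  simp only [mul_apply, replicateRow_apply, ← sum_mul, sum_row_of_mem_rowStochastic hP, one_mul]

lemma one_sub_add_replicateRow_mul (hP : P ∈ rowStochastic ℝ ι) (hw1 : ∑ i, w i = 1) :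
    (1 - P + replicateRow ι w) * replicateRow ι w = replicateRow ι w := by
  rw [add_mul, sub_mul, one_mul, mul_replicateRow_of_mem_rowStochastic hP,
    replicateRow_mul_self hw1, sub_self, zero_add]

lemma replicateRow_mul_one_sub_add (hw : w ᵥ* P = w) (hw1 : ∑ i, w i = 1) :
    replicateRow ι w * (1 - P + replicateRow ι w) = replicateRow ι w := by
  rw [mul_add, mul_sub, mul_one, replicateRow_mul_of_vecMul_eq hw,
    replicateRow_mul_self hw1, sub_self, zero_add]

lemma isUnit_det_one_sub_add_replicateRow (hP : P ∈ rowStochastic ℝ ι)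
    (hirr : ∀ i j, ∃ k, 0 < (P ^ k) i j) (hw : w ᵥ* P = w) (hw1 : ∑ i, w i = 1) :
    IsUnit (1 - P + replicateRow ι w).det := by
  rw [isUnit_iff_ne_zero, Ne, ← exists_mulVec_eq_zero_iff]
  rintro ⟨v, hv0, hv⟩
  refine hv0 (funext fun i => ?_)
  have hwv : replicateRow ι w *ᵥ v = 0 := by
    rw [← replicateRow_mul_one_sub_add hw hw1, ← mulVec_mulVec, hv, mulVec_zero]
  have hPv : P *ᵥ v = v := by
    rw [add_mulVec, hwv, add_zero, sub_mulVec, one_mulVec, sub_eq_zero] at hv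
    exact hv.symm
  have hconst : ∀ j, v j = v i := fun j => IsHarmonicOff.apply_eq (b := i) hP hirr
    (fun k _ => congrFun hPv k) j
  have := congrFun hwv i
  simp only [mulVec, dotProduct, replicateRow_apply, hconst, ← sum_mul, hw1, one_mul] at this
  exact this

lemma sub_mul_inv_sub_eq_one_sub {K : Type*} [Field K] {A E : Matrix ι ι K} (hA : IsUnit A.det)
    (hAE : A * E = E) (hEA : E * A = E) (hE : E * E = E) :
    (A - E) * (A⁻¹ - E) = 1 - E ∧ (A⁻¹ - E) * (A - E) = 1 - E := by
  have hinvE : A⁻¹ * E = E := by simpa only [hAE] using nonsing_inv_mul_cancel_left A E hA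
  have hEinv : E * A⁻¹ = E := by simpa only [hEA] using mul_nonsing_inv_cancel_right A E hA
  constructor <;>
  · simp only [sub_mul, mul_sub, mul_nonsing_inv A hA, nonsing_inv_mul A hA, hAE, hEA, hinvE,
      hEinv, hE]
    abel

noncomputable def fundamentalMatrix (P : Matrix ι ι ℝ) (w : ι → ℝ) : Matrix ι ι ℝ :=
  (1 - P + replicateRow ι w)⁻¹ - replicateRow ι w

lemma one_sub_mul_fundamentalMatrix (hP : P ∈ rowStochastic ℝ ι)
    (hirr : ∀ i j, ∃ k, 0 < (P ^ k) i j) (hw : w ᵥ* P = w) (hw1 : ∑ i, w i = 1) :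
    (1 - P) * fundamentalMatrix P w = 1 - replicateRow ι w := by
  simpa only [fundamentalMatrix, add_sub_cancel_right] using (sub_mul_inv_sub_eq_one_sub
    (isUnit_det_one_sub_add_replicateRow hP hirr hw hw1) (one_sub_add_replicateRow_mul hP hw1)
    (replicateRow_mul_one_sub_add hw hw1) (replicateRow_mul_self hw1)).1

lemma fundamentalMatrix_mul_one_sub (hP : P ∈ rowStochastic ℝ ι)
    (hirr : ∀ i j, ∃ k, 0 < (P ^ k) i j) (hw : w ᵥ* P = w) (hw1 : ∑ i, w i = 1) :
    fundamentalMatrix P w * (1 - P) = 1 - replicateRow ι w := by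
  simpa only [fundamentalMatrix, add_sub_cancel_right] using (sub_mul_inv_sub_eq_one_sub
    (isUnit_det_one_sub_add_replicateRow hP hirr hw hw1) (one_sub_add_replicateRow_mul hP hw1)
    (replicateRow_mul_one_sub_add hw hw1) (replicateRow_mul_self hw1)).2

lemma meanFirstPassage_eq (hP : P ∈ rowStochastic ℝ ι) (hirr : ∀ i j, ∃ k, 0 < (P ^ k) i j)
    {Z : Matrix ι ι ℝ} (hZ : (1 - P) * Z = 1 - replicateRow ι w)
    {M : ι → ι → ℝ} (hMdiag : ∀ b, M b b = 0)
    (hMstep : ∀ a b, a ≠ b → M a b = 1 + ∑ j, P a j * M j b) {b : ι} (hwb : w b ≠ 0) (a : ι) :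
    M a b = (Z b b - Z a b) / w b := by
  have hPZ : ∀ i ≠ b, (P * Z) i b = Z i b + w b := by
    intro i hi
    have := congrFun (congrFun hZ i) b
    rw [sub_mul, one_mul, Matrix.sub_apply, Matrix.sub_apply, one_apply_ne hi,
      replicateRow_apply] at this
    linarith
  refine congrFun (eq_of_hitting_equations hP hirr (u := fun a => M a b)
    (v := fun i => (Z b b - Z i b) / w b) (fun i hi => hMstep i b hi) (fun i hi => ?_)
    (by simp [hMdiag])) a
  have : (P *ᵥ fun j => (Z b b - Z j b) / w b) i = (Z b b - (P * Z) i b) / w b := by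
    simp only [mulVec, dotProduct, mul_apply, mul_div_assoc', mul_sub, ← sum_div,
      sum_sub_distrib, ← sum_mul, sum_row_of_mem_rowStochastic hP, one_mul]
  rw [this, hPZ i hi]
  field_simp
  ring

lemma dotProduct_diagonal_mul_one_sub_mulVec (hP1 : ∀ i, ∑ j, P i j = 1) (hw : w ᵥ* P = w)
    (x : ι → ℝ) :
    x ⬝ᵥ (diagonal w * (1 - P)) *ᵥ x = 2⁻¹ * ∑ i, ∑ j, w i * P i j * (x i - x j) ^ 2 := by
  have hrow : ∑ i, ∑ j, w i * P i j * x i ^ 2 = ∑ i, w i * x i ^ 2 := by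
    simp only [← sum_mul, ← mul_sum, hP1, mul_one]
  have hcol : ∑ i, ∑ j, w i * P i j * x j ^ 2 = ∑ i, w i * x i ^ 2 := by
    rw [sum_comm]
    simp only [← sum_mul]
    exact sum_congr rfl fun j _ => by rw [← congrFun hw j]; rfl
  have hexpand : ∑ i, ∑ j, w i * P i j * (x i - x j) ^ 2 = ∑ i, ∑ j, w i * P i j * x i ^ 2
      + ∑ i, ∑ j, w i * P i j * x j ^ 2 - 2 * ∑ i, ∑ j, w i * P i j * (x i * x j) := by
    simp only [mul_sum, ← sum_add_distrib, ← sum_sub_distrib]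
    exact sum_congr rfl fun i _ => sum_congr rfl fun j _ => by ring
  have hlhs : x ⬝ᵥ (diagonal w * (1 - P)) *ᵥ x
      = ∑ i, w i * x i ^ 2 - ∑ i, ∑ j, w i * P i j * (x i * x j) := by
    rw [← mulVec_mulVec, sub_mulVec, one_mulVec]
    simp only [dotProduct, mulVec_diagonal, Pi.sub_apply]
    simp only [mulVec, dotProduct, mul_sub, mul_sum, sum_sub_distrib]
    congr 1
    · exact sum_congr rfl fun i _ => by ring
    · exact sum_congr rfl fun i _ => sum_congr rfl fun j _ => by ring
  rw [hlhs, hexpand, hrow, hcol]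
  ring

lemma dotProduct_diagonal_mul_one_sub_mulVec_eq_sub {Z : Matrix ι ι ℝ}
    (hZ : Z * (1 - P) = 1 - replicateRow ι w) {a b : ι} {x : ι → ℝ}
    (hx : ∀ i, x i * w i = Z a i - Z b i) :
    x ⬝ᵥ (diagonal w * (1 - P)) *ᵥ x = x a - x b := by
  have hrow : x ᵥ* (diagonal w * (1 - P)) = Pi.single a 1 - Pi.single b 1 := by
    have hxw : x ᵥ* diagonal w = Z a - Z b := funext fun i => by rw [vecMul_diagonal, hx]; rfl
    rw [← vecMul_vecMul, hxw, sub_vecMul, ← mul_apply_eq_vecMul, ← mul_apply_eq_vecMul, hZ]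
    ext j
    simp [one_apply, Pi.single_apply, replicateRow_apply, eq_comm]
  rw [dotProduct_mulVec, hrow, sub_dotProduct, single_dotProduct, single_dotProduct, one_mul,
    one_mul]

/-- Embedding of an ergodic chain into `ℝⁿ` with the positive semidefinite
quadratic form `Q x = ∑ᵢⱼ xᵢ Δ^{ij} xⱼ`, realizing commuting times as squared
norms: concretely `f a = (Z̃ a 1, ..., Z̃ a n)` satisfies
`Q (f a - f b) = T a b`. -/
theorem euclidean_embedding_commute_times {n : ℕ}
    (P : Matrix (Fin n) (Fin n) ℝ)
    (hP0 : ∀ i j, 0 ≤ P i j) (hP1 : ∀ i, ∑ j, P i j = 1)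
    (herg : ∃ k : ℕ, ∀ i j, 0 < (P ^ k) i j)
    (w : Fin n → ℝ)
    (hw1 : ∑ i, w i = 1) (hwpos : ∀ i, 0 < w i)
    (hwP : ∀ j, ∑ i, w i * P i j = w j)
    (Pinf : Matrix (Fin n) (Fin n) ℝ) (hPinf : ∀ i j, Pinf i j = w j)
    (Z : Matrix (Fin n) (Fin n) ℝ) (hZ : Z = (1 - P + Pinf)⁻¹ - Pinf)
    (Ztil : Matrix (Fin n) (Fin n) ℝ) (hZtil : ∀ i j, Ztil i j = Z i j / w j)
    (Δ : Matrix (Fin n) (Fin n) ℝ)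
    (hΔ : ∀ i j, Δ i j = w i * ((if i = j then (1 : ℝ) else 0) - P i j))
    (M : Fin n → Fin n → ℝ)
    (hMdiag : ∀ b, M b b = 0)
    (hMstep : ∀ a b, a ≠ b → M a b = 1 + ∑ j, P a j * M j b)
    (T : Fin n → Fin n → ℝ)
    (hT : ∀ a b, T a b = M a b + M b a)
    (Q : (Fin n → ℝ) → ℝ)
    (hQ : ∀ x, Q x = ∑ i, ∑ j, x i * Δ i j * x j) :
    (∀ x : Fin n → ℝ, 0 ≤ Q x) ∧
    (∀ a b, Q (fun i => Ztil a i - Ztil b i) = T a b) := by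
  have hP : P ∈ rowStochastic ℝ (Fin n) := mem_rowStochastic_iff_sum.2 ⟨hP0, hP1⟩
  have hirr : ∀ i j, ∃ k, 0 < (P ^ k) i j := fun i j => herg.imp fun k hk => hk i j
  have hw : w ᵥ* P = w := funext hwP
  have hQΔ : ∀ x, Q x = x ⬝ᵥ (diagonal w * (1 - P)) *ᵥ x := fun x => by
    have hΔ' : Δ = diagonal w * (1 - P) := by
      ext i j
      rw [hΔ, diagonal_mul, Matrix.sub_apply, one_apply]
    simp only [hQ, hΔ', dotProduct, mulVec, mul_sum, mul_assoc]
  have hZ' : Z = fundamentalMatrix P w := by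
    rw [hZ, show Pinf = replicateRow (Fin n) w from ext hPinf]
    rfl
  have hZleft : (1 - P) * Z = 1 - replicateRow (Fin n) w :=
    hZ' ▸ one_sub_mul_fundamentalMatrix hP hirr hw hw1
  have hZright : Z * (1 - P) = 1 - replicateRow (Fin n) w :=
    hZ' ▸ fundamentalMatrix_mul_one_sub hP hirr hw hw1
  refine ⟨fun x => ?_, fun a b => ?_⟩
  · rw [hQΔ, dotProduct_diagonal_mul_one_sub_mulVec hP1 hw]
    exact mul_nonneg (by norm_num) (sum_nonneg fun i _ => sum_nonneg fun j _ =>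
      mul_nonneg (mul_nonneg (hwpos i).le (hP0 i j)) (sq_nonneg _))
  · have hMZ a b := meanFirstPassage_eq hP hirr hZleft hMdiag hMstep (hwpos b).ne' a
    rw [hQΔ, hT, hMZ a b, hMZ b a, dotProduct_diagonal_mul_one_sub_mulVec_eq_sub hZright
      fun i => by rw [hZtil, hZtil, ← sub_div, div_mul_cancel₀ _ (hwpos i).ne']]
    simp only [hZtil]
    ring
end

section
/- The matrix of commuting times of an ergodic finite Markov chain is realizable as squared Euclidean distances: there exist points x_1,...,x_n in some Euclidean space ℝ^d with ‖x_a − x_b‖² = T_{ab} for all states a, b. -/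
/-!
The hitting-time equations say `(1 - P) M = 𝟙𝟙ᵀ - diag r`, where `r` are the mean return times,
and Kac's formula `r = 1 / π` follows by multiplying with the stationary distribution `π`.
Every `x` with `∑ x = 0` is of the form `x = uᵀ(1 - P)`, so `xᵀ M x = -∑_b (u_b / π_b) x_b`,
which is minus the Dirichlet form of `P` in `L²(π)` evaluated at `u / π`, hence `≤ 0`. Thus `M`,
and with it `T = M + Mᵀ`, is conditionally negative semidefinite. By Schoenberg's criterion a
symmetric matrix with zero diagonal and this property is a matrix of squared Euclidean distances:
its Gromov products `(T a o + T b o - T a b) / 2` form a positive semidefinite, i.e. Gram, matrix.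
-/

open Finset Matrix

namespace Matrix

section Stochastic

variable {ι : Type*} [Fintype ι] {P Q : Matrix ι ι ℝ}

lemma pos_of_vecMul_eq_self (hpos : ∀ i j, 0 < Q i j) {w : ι → ℝ} (hw0 : 0 ≤ w) (hw : w ≠ 0)
    (hwQ : w ᵥ* Q = w) (j : ι) : 0 < w j := by
  obtain ⟨i, hi⟩ := Function.ne_iff.mp hw
  rw [← hwQ]
  exact sum_pos' (fun l _ => mul_nonneg (hw0 l) (hpos l j).le)
    ⟨i, mem_univ i, mul_pos (lt_of_le_of_ne (hw0 i) (Ne.symm hi)) (hpos i j)⟩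

variable [DecidableEq ι]

lemma vecMul_pow_eq_self {v : ι → ℝ} (hv : v ᵥ* P = v) (k : ℕ) : v ᵥ* (P ^ k) = v := by
  induction k with
  | zero => simp
  | succ k ih => rw [pow_succ, ← vecMul_vecMul, ih, hv]

lemma mulVec_pow_eq_self {v : ι → ℝ} (hv : P *ᵥ v = v) (k : ℕ) : (P ^ k) *ᵥ v = v := by
  induction k with
  | zero => simp
  | succ k ih => rw [pow_succ', ← mulVec_mulVec, ih, hv]

/-- Maximum principle. -/
lemma eq_of_mulVec_eq_self_of_pos_s12 (hQ : Q ∈ rowStochastic ℝ ι) (hpos : ∀ i j, 0 < Q i j)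
    {y : ι → ℝ} (hy : Q *ᵥ y = y) (i j : ι) : y i = y j := by
  have : Nonempty ι := ⟨i⟩
  obtain ⟨m, hm⟩ := Finite.exists_max y
  have hzero : ∑ l, Q m l * (y m - y l) = 0 := by
    simp only [mul_sub, sum_sub_distrib, ← sum_mul, sum_row_of_mem_rowStochastic hQ, one_mul]
    exact sub_eq_zero.mpr (congrFun hy m).symm
  have hmax : ∀ l, y l = y m := fun l => by
    have := (sum_eq_zero_iff_of_nonneg fun l _ =>
      mul_nonneg (hpos m l).le (sub_nonneg.mpr (hm l))).mp hzero l (mem_univ l)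
    linarith [(mul_eq_zero.mp this).resolve_left (hpos m l).ne']
  rw [hmax i, hmax j]

lemma eq_of_mulVec_eq_self_of_pow_pos (hP : P ∈ rowStochastic ℝ ι)
    (herg : ∃ k : ℕ, ∀ i j, 0 < (P ^ k) i j) {v : ι → ℝ} (hv : P *ᵥ v = v) (i j : ι) :
    v i = v j := by
  obtain ⟨k, hk⟩ := herg
  exact eq_of_mulVec_eq_self_of_pos_s12 (pow_mem hP k) hk (mulVec_pow_eq_self hv k) i j

lemma abs_vecMul_eq_self (hQ : Q ∈ rowStochastic ℝ ι) {v : ι → ℝ} (hv : v ᵥ* Q = v) :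
    |v| ᵥ* Q = |v| := by
  have hle : ∀ j, |v| j ≤ (|v| ᵥ* Q) j := fun j => by
    calc |v| j = |∑ i, v i * Q i j| := by rw [Pi.abs_apply, ← congrFun hv j]; rfl
      _ ≤ ∑ i, |v i * Q i j| := abs_sum_le_sum_abs _ _
      _ = (|v| ᵥ* Q) j := by
        simp only [abs_mul, abs_of_nonneg (hQ.1 _ _)]
        rfl
  have hsum : ∑ j, (|v| ᵥ* Q) j = ∑ j, |v| j := by
    rw [← dotProduct_one, ← dotProduct_mulVec, one_vecMul_of_mem_rowStochastic hQ, dotProduct_one]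
  funext j
  exact ((sum_eq_sum_iff_of_le fun j _ => hle j).mp hsum.symm j (mem_univ j)).symm

lemma exists_stationary_of_pow_pos [Nonempty ι] (hP : P ∈ rowStochastic ℝ ι)
    (herg : ∃ k : ℕ, ∀ i j, 0 < (P ^ k) i j) :
    ∃ π : ι → ℝ, (∀ i, 0 < π i) ∧ ∑ i, π i = 1 ∧ π ᵥ* P = π := by
  have hdet : (1 - P).det = 0 := by
    refine exists_mulVec_eq_zero_iff.mp ⟨1, one_ne_zero, ?_⟩
    rw [sub_mulVec, one_mulVec, one_vecMul_of_mem_rowStochastic hP, sub_self]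
  obtain ⟨v, hv0, hv⟩ := exists_vecMul_eq_zero_iff.mpr hdet
  have hvP : v ᵥ* P = v := by
    rw [vecMul_sub, vecMul_one, sub_eq_zero] at hv
    exact hv.symm
  obtain ⟨k, hk⟩ := herg
  set w := |v|
  have hwP : w ᵥ* P = w := abs_vecMul_eq_self hP hvP
  have hw0 : w ≠ 0 := fun h => hv0 (funext fun i => abs_eq_zero.mp (congrFun h i))
  have hwpos : ∀ i, 0 < w i :=
    pos_of_vecMul_eq_self hk (abs_nonneg v) hw0 (vecMul_pow_eq_self hwP k)
  have hsum : 0 < ∑ i, w i := sum_pos (fun i _ => hwpos i) univ_nonempty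
  refine ⟨(∑ i, w i)⁻¹ • w, fun i => mul_pos (inv_pos.mpr hsum) (hwpos i), ?_, ?_⟩
  · simp only [Pi.smul_apply, smul_eq_mul, ← mul_sum, inv_mul_cancel₀ hsum.ne']
  · rw [smul_vecMul, hwP]

lemma exists_vecMul_one_sub_eq_of_pow_pos [Nonempty ι] (hP : P ∈ rowStochastic ℝ ι)
    (herg : ∃ k : ℕ, ∀ i j, 0 < (P ^ k) i j) {x : ι → ℝ} (hx : ∑ i, x i = 0) :
    ∃ u, u ᵥ* (1 - P) = x := by
  obtain ⟨π, -, hπ1, hπP⟩ := exists_stationary_of_pow_pos hP herg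
  have hP1 : (1 - P) *ᵥ 1 = 0 := by
    rw [sub_mulVec, one_mulVec, one_vecMul_of_mem_rowStochastic hP, sub_self]
  -- the kernel of `1 - P` consists of the constants, on which `π` does not vanish
  set A := 1 - P + vecMulVec 1 π
  have hdet : A.det ≠ 0 := by
    intro h
    obtain ⟨v, hv0, hv⟩ := exists_mulVec_eq_zero_iff.mpr h
    rw [add_mulVec, vecMulVec_mulVec, op_smul_eq_smul] at hv
    have hπv : π ⬝ᵥ v = 0 := by
      simpa [dotProduct_add, dotProduct_mulVec, hπP, sub_mulVec, dotProduct_one, hπ1] using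
        congrArg (π ⬝ᵥ ·) hv
    have hPv : P *ᵥ v = v := by
      rw [hπv, zero_smul, add_zero, sub_mulVec, one_mulVec, sub_eq_zero] at hv
      exact hv.symm
    have hconst := eq_of_mulVec_eq_self_of_pow_pos hP herg hPv
    refine hv0 (funext fun i => ?_)
    rw [Pi.zero_apply, ← hπv, dotProduct]
    simp only [hconst _ i, ← sum_mul, hπ1, one_mul]
  set u := x ᵥ* A⁻¹
  have hu : u ᵥ* A = x := by
    rw [vecMul_vecMul, nonsing_inv_mul _ (isUnit_iff_ne_zero.mpr hdet), vecMul_one]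
  rw [vecMul_add, vecMul_vecMulVec] at hu
  have hu1 : u ⬝ᵥ 1 = 0 := by
    have := congrArg (· ⬝ᵥ (1 : ι → ℝ)) hu
    rwa [add_dotProduct, ← dotProduct_mulVec, hP1, dotProduct_zero, smul_dotProduct,
      dotProduct_one π, hπ1, smul_eq_mul, mul_one, zero_add, dotProduct_one x, hx] at this
  exact ⟨u, by rwa [hu1, zero_smul, add_zero] at hu⟩

end Stochastic

variable {ι : Type*} [Fintype ι]

def CondNegSemidef (A : Matrix ι ι ℝ) : Prop :=
  ∀ x : ι → ℝ, ∑ i, x i = 0 → x ⬝ᵥ (A *ᵥ x) ≤ 0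

lemma CondNegSemidef.add_transpose {A : Matrix ι ι ℝ} (hA : A.CondNegSemidef) :
    (A + Aᵀ).CondNegSemidef := fun x hx => by
  rw [add_mulVec, dotProduct_add, mulVec_transpose, dotProduct_comm x (x ᵥ* A),
    ← dotProduct_mulVec]
  linarith [hA x hx]

/-- If `T a b = ‖x a - x b‖ ^ 2`, this is the Gram matrix `⟪x a - x o, x b - x o⟫`. -/
noncomputable def gromovProduct (T : Matrix ι ι ℝ) (o : ι) : Matrix ι ι ℝ :=
  of fun a b => (T a o + T b o - T a b) / 2

lemma norm_sub_sq_eq_of_gram_eq_gromovProduct {T : Matrix ι ι ℝ} (hdiag : ∀ a, T a a = 0)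
    {o : ι} {f : ι → EuclideanSpace ℝ ι} (hf : gram ℝ f = gromovProduct T o) (a b : ι) :
    ‖f a - f b‖ ^ 2 = T a b := by
  have hinner : ∀ a b, inner ℝ (f a) (f b) = (T a o + T b o - T a b) / 2 := fun a b => by
    rw [← gram_apply, hf]
    rfl
  rw [norm_sub_sq_real, ← real_inner_self_eq_norm_sq, ← real_inner_self_eq_norm_sq, hinner,
    hinner, hinner, hdiag, hdiag]
  ring

variable [DecidableEq ι]

lemma gromovProduct_eq (T : Matrix ι ι ℝ) (o : ι) :
    gromovProduct T o = (1 / 2 : ℝ) •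
      (vecMulVec (T *ᵥ Pi.single o 1) 1 + vecMulVec 1 (T *ᵥ Pi.single o 1) - T) := by
  ext a b
  simp only [gromovProduct, of_apply, one_div, mulVec_single, MulOpposite.op_one, one_smul,
    vecMulVec_one, one_vecMulVec, smul_apply, sub_apply, add_apply, replicateCol_apply,
    col_apply, replicateRow_apply, smul_eq_mul]
  ring

lemma posSemidef_gromovProduct {T : Matrix ι ι ℝ} (hsymm : T.IsSymm) (hdiag : ∀ a, T a a = 0)
    (hT : T.CondNegSemidef) (o : ι) : (gromovProduct T o).PosSemidef := by
  refine .of_dotProduct_mulVec_nonneg ?_ fun x => ?_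
  · ext a b
    simp only [conjTranspose_apply, star_trivial, gromovProduct, of_apply]
    rw [← transpose_apply T a b, hsymm]
    ring
  · rw [star_trivial, gromovProduct_eq, smul_mulVec, sub_mulVec, add_mulVec, vecMulVec_mulVec,
      vecMulVec_mulVec, op_smul_eq_smul, op_smul_eq_smul, dotProduct_smul, dotProduct_sub,
      dotProduct_add, dotProduct_smul, dotProduct_smul, dotProduct_comm x 1,
      dotProduct_comm (T *ᵥ _) x]
    set e : ι → ℝ := Pi.single o 1
    set s := 1 ⬝ᵥ x
    have hTe : e ⬝ᵥ (T *ᵥ x) = x ⬝ᵥ (T *ᵥ e) := by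
      rw [dotProduct_comm, dotProduct_mulVec, ← mulVec_transpose, hsymm]
    have hee : e ⬝ᵥ (T *ᵥ e) = 0 := by
      rw [single_one_dotProduct, mulVec_single_one, col_apply, hdiag]
    -- the form of `T` at the centred vector `x - s e` is `xᵀ T x - 2 s xᵀ T e`
    have hy := hT (x - s • e) (by
      rw [← one_dotProduct, dotProduct_sub, dotProduct_smul, one_dotProduct e]
      simp [s, e])
    rw [mulVec_sub, mulVec_smul, dotProduct_sub, sub_dotProduct, sub_dotProduct, dotProduct_smul,
      smul_dotProduct, smul_dotProduct, dotProduct_smul, hTe, hee] at hy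
    simp only [smul_eq_mul] at hy ⊢
    linarith

lemma PosSemidef.exists_gram_eq {G : Matrix ι ι ℝ} (hG : G.PosSemidef) :
    ∃ f : ι → EuclideanSpace ℝ ι, gram ℝ f = G := by
  obtain ⟨B, rfl⟩ : ∃ B : Matrix ι ι ℝ, G = star B * B := by
    open scoped MatrixOrder Matrix.Norms.L2Operator in
    exact CStarAlgebra.nonneg_iff_eq_star_mul_self.mp hG.nonneg
  refine ⟨fun j => WithLp.toLp 2 (fun i => B i j), ?_⟩
  rw [gram_eq_conjTranspose_mul (EuclideanSpace.basisFun ι ℝ)]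
  simp only [EuclideanSpace.basisFun_repr, conjTranspose_eq_transpose_of_trivial]
  rfl

theorem exists_euclidean_embedding_of_condNegSemidef [Nonempty ι] {T : Matrix ι ι ℝ}
    (hsymm : T.IsSymm) (hdiag : ∀ a, T a a = 0) (hT : T.CondNegSemidef) :
    ∃ f : ι → EuclideanSpace ℝ ι, ∀ a b, ‖f a - f b‖ ^ 2 = T a b := by
  obtain ⟨f, hf⟩ :=
    (posSemidef_gromovProduct hsymm hdiag hT (Classical.arbitrary ι)).exists_gram_eq
  exact ⟨f, norm_sub_sq_eq_of_gram_eq_gromovProduct hdiag hf⟩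

end Matrix

namespace MarkovChain

variable {ι : Type*} [Fintype ι] [DecidableEq ι] {P M : Matrix ι ι ℝ}

def returnTime (P M : Matrix ι ι ℝ) (b : ι) : ℝ := 1 + ∑ j, P b j * M j b

lemma one_sub_mul_hittingTime (hMdiag : ∀ b, M b b = 0)
    (hMstep : ∀ a b, a ≠ b → M a b = 1 + ∑ j, P a j * M j b) :
    (1 - P) * M = vecMulVec 1 1 - diagonal (returnTime P M) := by
  rw [Matrix.sub_mul, Matrix.one_mul]
  ext a b
  simp only [Matrix.sub_apply, mul_apply, vecMulVec_apply, diagonal_apply, returnTime,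
    Pi.one_apply, mul_one]
  split_ifs with h
  · subst h
    rw [hMdiag]
    ring
  · rw [hMstep a b h]
    ring

/-- Kac's formula. -/
lemma stationary_mul_returnTime (hMdiag : ∀ b, M b b = 0)
    (hMstep : ∀ a b, a ≠ b → M a b = 1 + ∑ j, P a j * M j b) {π : ι → ℝ}
    (hπ1 : ∑ i, π i = 1) (hπP : π ᵥ* P = π) (b : ι) : π b * returnTime P M b = 1 := by
  have h := congrFun (congrArg (π ᵥ* ·) (one_sub_mul_hittingTime hMdiag hMstep)) b
  rw [← vecMul_vecMul, vecMul_sub, vecMul_one, hπP, sub_self, zero_vecMul, vecMul_sub,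
    vecMul_vecMulVec, dotProduct_one, hπ1, one_smul, Pi.sub_apply, vecMul_diagonal,
    Pi.zero_apply, Pi.one_apply] at h
  linarith

lemma sum_stationary_mul_mul_le (hP : P ∈ rowStochastic ℝ ι) {π : ι → ℝ} (hπ0 : ∀ i, 0 ≤ π i)
    (hπP : π ᵥ* P = π) (W : ι → ℝ) :
    ∑ i, ∑ j, π i * P i j * (W i * W j) ≤ ∑ i, π i * W i ^ 2 := by
  have hrow : ∑ i, ∑ j, π i * P i j * W i ^ 2 = ∑ i, π i * W i ^ 2 := by
    refine sum_congr rfl fun i _ => ?_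
    rw [← sum_mul, ← mul_sum, sum_row_of_mem_rowStochastic hP, mul_one]
  have hcol : ∑ i, ∑ j, π i * P i j * W j ^ 2 = ∑ j, π j * W j ^ 2 := by
    rw [sum_comm]
    refine sum_congr rfl fun j _ => ?_
    rw [← sum_mul, ← congrFun hπP j]
    rfl
  calc ∑ i, ∑ j, π i * P i j * (W i * W j)
      ≤ ∑ i, ∑ j, (π i * P i j * W i ^ 2 / 2 + π i * P i j * W j ^ 2 / 2) := by
        gcongr with i _ j _
        have := mul_nonneg (mul_nonneg (hπ0 i) (hP.1 i j)) (sq_nonneg (W i - W j))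
        linarith
    _ = ∑ i, π i * W i ^ 2 := by
        simp only [sum_add_distrib, ← sum_div, hrow, hcol]
        ring

lemma condNegSemidef_hittingTime [Nonempty ι] (hP : P ∈ rowStochastic ℝ ι)
    (herg : ∃ k : ℕ, ∀ i j, 0 < (P ^ k) i j) (hMdiag : ∀ b, M b b = 0)
    (hMstep : ∀ a b, a ≠ b → M a b = 1 + ∑ j, P a j * M j b) :
    M.CondNegSemidef := by
  intro x hx
  obtain ⟨π, hπ0, hπ1, hπP⟩ := exists_stationary_of_pow_pos hP herg
  obtain ⟨u, rfl⟩ := exists_vecMul_one_sub_eq_of_pow_pos hP herg hx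
  set W := u * returnTime P M
  have hu : ∀ b, u b = π b * W b := fun b => by
    show u b = π b * (u b * returnTime P M b)
    rw [mul_left_comm, stationary_mul_returnTime hMdiag hMstep hπ1 hπP, mul_one]
  have hform : (u ᵥ* (1 - P)) ⬝ᵥ (M *ᵥ (u ᵥ* (1 - P))) = -(W ⬝ᵥ (u ᵥ* (1 - P))) := by
    rw [← dotProduct_mulVec, mulVec_mulVec, one_sub_mul_hittingTime hMdiag hMstep, sub_mulVec,
      vecMulVec_mulVec, one_dotProduct, hx, MulOpposite.op_zero, zero_smul, zero_sub,
      dotProduct_neg, dotProduct_mulVec]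
    congr 2
    funext b
    exact vecMul_diagonal u _ b
  have hWx : W ⬝ᵥ (u ᵥ* (1 - P)) =
      ∑ j, π j * W j ^ 2 - ∑ i, ∑ j, π i * P i j * (W i * W j) := by
    rw [vecMul_sub, vecMul_one, dotProduct_sub]
    congr 1
    · simp only [dotProduct, hu]
      exact sum_congr rfl fun j _ => by ring
    · simp only [dotProduct, vecMul, hu, mul_sum]
      rw [sum_comm]
      exact sum_congr rfl fun i _ => sum_congr rfl fun j _ => by ring
  rw [hform, hWx]
  linarith [sum_stationary_mul_mul_le hP (fun i => (hπ0 i).le) hπP W]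

end MarkovChain

open MarkovChain

/-- The matrix of commuting times of an ergodic finite Markov chain is
realizable as squared Euclidean distances. -/
theorem commute_times_realizable {n : ℕ}
    (P : Matrix (Fin n) (Fin n) ℝ)
    (hP0 : ∀ i j, 0 ≤ P i j) (hP1 : ∀ i, ∑ j, P i j = 1)
    (herg : ∃ k : ℕ, ∀ i j, 0 < (P ^ k) i j)
    (M : Fin n → Fin n → ℝ)
    (hMdiag : ∀ b, M b b = 0)
    (hMstep : ∀ a b, a ≠ b → M a b = 1 + ∑ j, P a j * M j b)
    (T : Fin n → Fin n → ℝ)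
    (hT : ∀ a b, T a b = M a b + M b a) :
    ∃ (d : ℕ) (x : Fin n → EuclideanSpace ℝ (Fin d)),
      ∀ a b, ‖x a - x b‖ ^ 2 = T a b := by
  rcases isEmpty_or_nonempty (Fin n) with hn | hn
  · exact ⟨0, 0, fun a => isEmptyElim a⟩
  have hP : P ∈ rowStochastic ℝ (Fin n) := mem_rowStochastic_iff_sum.mpr ⟨hP0, hP1⟩
  have hM : CondNegSemidef (M : Matrix (Fin n) (Fin n) ℝ) :=
    condNegSemidef_hittingTime hP herg hMdiag hMstep
  obtain ⟨x, hx⟩ := exists_euclidean_embedding_of_condNegSemidef (isSymm_add_transpose_self _)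
    (fun a => show M a a + M a a = 0 by rw [hMdiag, add_zero]) hM.add_transpose
  exact ⟨n, x, fun a b => by rw [hx, hT]; rfl⟩
end

section
/- For an ergodic finite Markov chain, all triangles formed by the Euclidean embedding realizing commuting times as squared distances have weakly acute angles; equivalently, for all a, b, c, ‖f(a)−f(c)‖² ≤ ‖f(a)−f(b)‖² + ‖f(b)−f(c)‖², i.e., the inner product ⟨f(a)−f(b), f(c)−f(b)⟩ ≥ 0. -/
/-!
Fix `b` and `c` and put `u x = M x b + M b c - M x c`. By the first-passage equations `u` is
harmonic for `P` away from `b` and `c`, while `u b = 0` and `u c = M c b + M b c ≥ 0`. If `u` took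
a negative minimum, the set where it is attained would avoid `b`, yet be closed under the
transitions of the chain; but the equations for the hitting times of `b` admit no solution on
such a set, as the point of it minimising `M · b` would satisfy `M x b ≥ 1 + M x b`. Hence
`u ≥ 0`, i.e. hitting times satisfy the triangle inequality, and so do commute times
`T a b = M a b + M b a`. Expanding `‖f a - f c‖²` turns this into `⟪f a - f b, f c - f b⟫ ≥ 0`.
-/

open Finset

lemma le_sum_mul_of_forall_le {ι : Type*} [Fintype ι] {w v : ι → ℝ} {m : ℝ}
    (hw0 : ∀ j, 0 ≤ w j) (hw1 : ∑ j, w j = 1) (hm : ∀ j, w j ≠ 0 → m ≤ v j) :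
    m ≤ ∑ j, w j * v j :=
  calc m = ∑ j, w j * m := by rw [← sum_mul, hw1, one_mul]
    _ ≤ ∑ j, w j * v j := sum_le_sum fun j _ => by
      rcases eq_or_ne (w j) 0 with h | h
      · simp [h]
      · exact mul_le_mul_of_nonneg_left (hm j h) (hw0 j)

lemma eq_of_sum_mul_eq_of_forall_le {ι : Type*} [Fintype ι] {w v : ι → ℝ} {m : ℝ}
    (hw0 : ∀ j, 0 ≤ w j) (hw1 : ∑ j, w j = 1) (hm : ∀ j, m ≤ v j)
    (hsum : ∑ j, w j * v j = m) {j : ι} (hj : w j ≠ 0) : v j = m := by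
  have hzero : ∑ i, w i * (v i - m) = 0 := by
    simp only [mul_sub, sum_sub_distrib, ← sum_mul, hw1, one_mul, hsum, sub_self]
  have hterm := (sum_eq_zero_iff_of_nonneg fun i _ =>
    mul_nonneg (hw0 i) (sub_nonneg.2 (hm i))).1 hzero j (mem_univ j)
  linarith [(mul_eq_zero.1 hterm).resolve_left hj]

section HittingTime

variable {ι : Type*} [Fintype ι] {P : Matrix ι ι ℝ} {M : ι → ι → ℝ}

theorem hittingTime_nonneg (hP0 : ∀ i j, 0 ≤ P i j) (hP1 : ∀ i, ∑ j, P i j = 1)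
    (hMdiag : ∀ b, M b b = 0) (hMstep : ∀ a b, a ≠ b → M a b = 1 + ∑ j, P a j * M j b)
    (a b : ι) : 0 ≤ M a b := by
  have : Nonempty ι := ⟨a⟩
  obtain ⟨x, hx⟩ := Finite.exists_min (M · b)
  rcases eq_or_ne x b with rfl | hxb
  · simpa [hMdiag] using hx a
  · have := le_sum_mul_of_forall_le (hP0 x) (hP1 x) fun j _ => hx j
    linarith [hMstep x b hxb]

/-- Solvability of the first-passage equations forces the chain to be irreducible. -/
theorem eq_univ_of_nonempty_of_closed (hP0 : ∀ i j, 0 ≤ P i j) (hP1 : ∀ i, ∑ j, P i j = 1)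
    (hMstep : ∀ a b, a ≠ b → M a b = 1 + ∑ j, P a j * M j b) {S : Set ι} (hS : S.Nonempty)
    (hclosed : ∀ x ∈ S, ∀ j, P x j ≠ 0 → j ∈ S) : S = Set.univ := by
  refine Set.eq_univ_of_forall fun b => by_contra fun hb => ?_
  obtain ⟨y, hyS, hy⟩ := S.exists_min_image (M · b) S.toFinite hS
  have := le_sum_mul_of_forall_le (hP0 y) (hP1 y) fun j hj => hy j (hclosed y hyS j hj)
  linarith [hMstep y b (ne_of_mem_of_not_mem hyS hb)]

theorem hittingTime_triangle (hP0 : ∀ i j, 0 ≤ P i j) (hP1 : ∀ i, ∑ j, P i j = 1)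
    (hMdiag : ∀ b, M b b = 0) (hMstep : ∀ a b, a ≠ b → M a b = 1 + ∑ j, P a j * M j b)
    (a b c : ι) : M a c ≤ M a b + M b c := by
  set u : ι → ℝ := fun x => M x b + M b c - M x c with hu
  have harmonic : ∀ x, x ≠ b → x ≠ c → u x = ∑ j, P x j * u j := by
    intro x hxb hxc
    simp only [hu, mul_sub, mul_add, sum_sub_distrib, sum_add_distrib, ← sum_mul, hP1, one_mul]
    rw [hMstep x b hxb, hMstep x c hxc]
    ring
  have : Nonempty ι := ⟨a⟩
  obtain ⟨x₀, hx₀⟩ := Finite.exists_min u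
  suffices 0 ≤ u x₀ by linarith [hx₀ a]
  by_contra! hneg
  set S : Set ι := {x | u x = u x₀}
  have hb : b ∉ S := fun h => by
    simp only [S, hu, Set.mem_ofPred_eq, hMdiag, zero_add, sub_self] at h
    linarith
  have hc : c ∉ S := fun h => by
    simp only [S, hu, Set.mem_ofPred_eq, hMdiag, sub_zero] at h
    linarith [hittingTime_nonneg hP0 hP1 hMdiag hMstep c b,
      hittingTime_nonneg hP0 hP1 hMdiag hMstep b c]
  have hclosed : ∀ x ∈ S, ∀ j, P x j ≠ 0 → j ∈ S := fun x hx j hj =>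
    eq_of_sum_mul_eq_of_forall_le (hP0 x) (hP1 x) hx₀
      ((harmonic x (ne_of_mem_of_not_mem hx hb) (ne_of_mem_of_not_mem hx hc)).symm.trans hx) hj
  exact hb (eq_univ_of_nonempty_of_closed hP0 hP1 hMstep ⟨x₀, show x₀ ∈ S from rfl⟩
    hclosed ▸ Set.mem_univ b)

end HittingTime

theorem norm_sub_sq_le_add_iff_inner_nonneg {E : Type*} [NormedAddCommGroup E]
    [InnerProductSpace ℝ E] (x y z : E) :
    ‖x - z‖ ^ 2 ≤ ‖x - y‖ ^ 2 + ‖y - z‖ ^ 2 ↔ 0 ≤ inner ℝ (x - y) (z - y) := by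
  rw [show x - z = (x - y) - (z - y) by abel, norm_sub_sq_real, norm_sub_rev y z]
  constructor <;> intro h <;> linarith

theorem embedding_angles_weakly_acute_general {n d : ℕ}
    (P : Matrix (Fin n) (Fin n) ℝ)
    (hP0 : ∀ i j, 0 ≤ P i j) (hP1 : ∀ i, ∑ j, P i j = 1)
    (M : Fin n → Fin n → ℝ)
    (hMdiag : ∀ b, M b b = 0)
    (hMstep : ∀ a b, a ≠ b → M a b = 1 + ∑ j, P a j * M j b)
    (T : Fin n → Fin n → ℝ)
    (hT : ∀ a b, T a b = M a b + M b a)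
    (f : Fin n → EuclideanSpace ℝ (Fin d))
    (hf : ∀ a b, ‖f a - f b‖ ^ 2 = T a b) :
    ∀ a b c,
      ‖f a - f c‖ ^ 2 ≤ ‖f a - f b‖ ^ 2 + ‖f b - f c‖ ^ 2 ∧
      0 ≤ (inner ℝ (f a - f b) (f c - f b) : ℝ) := by
  intro a b c
  have hcommute : T a c ≤ T a b + T b c := by
    simp only [hT]
    linarith [hittingTime_triangle hP0 hP1 hMdiag hMstep a b c,
      hittingTime_triangle hP0 hP1 hMdiag hMstep c b a]
  have hnorm : ‖f a - f c‖ ^ 2 ≤ ‖f a - f b‖ ^ 2 + ‖f b - f c‖ ^ 2 := by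
    simpa only [hf] using hcommute
  exact ⟨hnorm, (norm_sub_sq_le_add_iff_inner_nonneg _ _ _).1 hnorm⟩

/-- In a Euclidean embedding realizing commuting times as squared distances,
all angles are weakly acute: `‖f a - f c‖² ≤ ‖f a - f b‖² + ‖f b - f c‖²`,
equivalently `⟪f a - f b, f c - f b⟫ ≥ 0`. -/
theorem embedding_angles_weakly_acute {n d : ℕ}
    (P : Matrix (Fin n) (Fin n) ℝ)
    (hP0 : ∀ i j, 0 ≤ P i j) (hP1 : ∀ i, ∑ j, P i j = 1)
    (herg : ∃ k : ℕ, ∀ i j, 0 < (P ^ k) i j)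
    (M : Fin n → Fin n → ℝ)
    (hMdiag : ∀ b, M b b = 0)
    (hMstep : ∀ a b, a ≠ b → M a b = 1 + ∑ j, P a j * M j b)
    (T : Fin n → Fin n → ℝ)
    (hT : ∀ a b, T a b = M a b + M b a)
    (f : Fin n → EuclideanSpace ℝ (Fin d))
    (hf : ∀ a b, ‖f a - f b‖ ^ 2 = T a b) :
    ∀ a b c,
      ‖f a - f c‖ ^ 2 ≤ ‖f a - f b‖ ^ 2 + ‖f b - f c‖ ^ 2 ∧
      0 ≤ (inner ℝ (f a - f b) (f c - f b) : ℝ) :=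
  embedding_angles_weakly_acute_general P hP0 hP1 M hMdiag hMstep T hT f hf
end
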